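/- Let m ≥ 2 and 1 ≤ p < ∞ be fixed and 1 ≤ j ≤ m. Then there exist positive constants A, B (depending only on p and m) such that for all k ≥ 1 and all s ∈ ℝ: A·(k^{p+m−1}|s|^p + k^{m−1}) ≤ Σ_{n ∈ ℕ^m, |n| = k} |s·n_j − 1|^p ≤ B·(k^{p+m−1}|s|^p + k^{m−1}). -/

import Mathlib

/-!
Grouping the tuples according to `t = n j`, the sum becomes `∑_{t ≤ k} N(k - t) |s t - 1| ^ p`,
where `N(r)`, the number of `(m - 1)`-tuples with sum `r`, lies between
`(r / (m - 1) + 1) ^ (m - 2)` and `(r + 1) ^ (m - 2)`. Every term is at most `(k |s| + 1) ^ p`,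
which gives the upper bound. For the lower bound, there is an interval of `t` of length `≳ k`,
ending `≳ k` before `k`, on which `|s t - 1| ≳ k |s| + 1`; there `N(k - t) ≳ k ^ (m - 2)`.
Finally `(k |s| + 1) ^ p` is comparable to `(k |s|) ^ p + 1` since `p ≥ 1`.
-/

open Finset

namespace Finset.Nat

lemma apply_le_of_mem_antidiagonalTuple {d k : ℕ} {n : Fin d → ℕ}
    (hn : n ∈ antidiagonalTuple d k) (j : Fin d) : n j ≤ k := by
  rw [mem_antidiagonalTuple] at hn
  exact hn ▸ single_le_sum (fun i _ => Nat.zero_le (n i)) (mem_univ j)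

lemma card_filter_antidiagonalTuple_apply_eq {d k t : ℕ} (j : Fin (d + 1)) (ht : t ≤ k) :
    #{n ∈ antidiagonalTuple (d + 1) k | n j = t} = #(antidiagonalTuple d (k - t)) := by
  refine card_nbij' j.removeNth (j.insertNth (α := fun _ => ℕ) t) ?_ ?_ ?_ ?_
  · intro n hn
    simp only [coe_filter, Set.mem_ofPred_eq, mem_antidiagonalTuple] at hn
    have := Fin.sum_univ_succAbove n j
    simp only [mem_coe, mem_antidiagonalTuple, Fin.removeNth]
    omega
  · intro y hy
    simp only [mem_coe, mem_antidiagonalTuple] at hy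
    simp only [coe_filter, Set.mem_ofPred_eq, mem_antidiagonalTuple, Fin.sum_univ_succAbove _ j,
      Fin.insertNth_apply_same, Fin.insertNth_apply_succAbove, hy, and_true]
    omega
  · intro n hn
    simp only [coe_filter, Set.mem_ofPred_eq] at hn
    rw [← hn.2]
    exact Fin.insertNth_self_removeNth j n
  · intro y _
    exact Fin.removeNth_insertNth (α := fun _ => ℕ) j t y

lemma sum_antidiagonalTuple_succ_comp_apply {M : Type*} [AddCommMonoid M] (d k : ℕ)
    (j : Fin (d + 1)) (g : ℕ → M) :
    ∑ n ∈ antidiagonalTuple (d + 1) k, g (n j) =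
      ∑ t ∈ range (k + 1), #(antidiagonalTuple d (k - t)) • g t := by
  rw [← sum_fiberwise_of_maps_to (g := fun n => n j) (t := range (k + 1))
    fun n hn => mem_range_succ_iff.2 (apply_le_of_mem_antidiagonalTuple hn j)]
  refine sum_congr rfl fun t ht => ?_
  rw [sum_congr rfl fun n hn => congrArg g (mem_filter.1 hn).2, sum_const,
    card_filter_antidiagonalTuple_apply_eq j (mem_range_succ_iff.1 ht)]

lemma card_antidiagonalTuple_succ (d k : ℕ) :
    #(antidiagonalTuple (d + 1) k) = ∑ t ∈ range (k + 1), #(antidiagonalTuple d (k - t)) := by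
  simpa using sum_antidiagonalTuple_succ_comp_apply (M := ℕ) d k 0 fun _ => 1

lemma card_antidiagonalTuple_succ_le (d r : ℕ) : #(antidiagonalTuple (d + 1) r) ≤ (r + 1) ^ d := by
  induction d generalizing r with
  | zero => simp [antidiagonalTuple_one]
  | succ d ih =>
    calc #(antidiagonalTuple (d + 2) r) ≤ ∑ _t ∈ range (r + 1), (r + 1) ^ d :=
          (card_antidiagonalTuple_succ _ r).trans_le <| sum_le_sum fun t _ =>
            (ih (r - t)).trans (Nat.pow_le_pow_left (by omega) d)
      _ = (r + 1) ^ (d + 1) := by simp [pow_succ']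

lemma pow_le_card_antidiagonalTuple_succ (d r : ℕ) :
    (r / (d + 1) + 1) ^ d ≤ #(antidiagonalTuple (d + 1) r) := by
  induction d generalizing r with
  | zero => simp [antidiagonalTuple_one]
  | succ d ih =>
    have hq : r / (d + 2) * (d + 1) + r / (d + 2) ≤ r := by
      have := Nat.div_mul_le_self r (d + 2)
      linarith
    calc (r / (d + 2) + 1) ^ (d + 1) = ∑ _t ∈ range (r / (d + 2) + 1), (r / (d + 2) + 1) ^ d := by
          simp [pow_succ']
      _ ≤ ∑ t ∈ range (r / (d + 2) + 1), #(antidiagonalTuple (d + 1) (r - t)) :=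
          sum_le_sum fun t ht => by
            have : r / (d + 2) ≤ (r - t) / (d + 1) :=
              (Nat.le_div_iff_mul_le (by omega)).2 (by have := mem_range_succ_iff.1 ht; omega)
            exact (Nat.pow_le_pow_left (by omega) d).trans (ih (r - t))
      _ ≤ ∑ t ∈ range (r + 1), #(antidiagonalTuple (d + 1) (r - t)) :=
          sum_le_sum_of_subset (range_subset_range.2 (by omega))
      _ = #(antidiagonalTuple (d + 2) r) := (card_antidiagonalTuple_succ _ r).symm

lemma div_pow_le_card_antidiagonalTuple_succ (d r : ℕ) :
    (((r : ℝ) + 1) / (d + 1)) ^ d ≤ #(antidiagonalTuple (d + 1) r) := by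
  have hfloor : ((r : ℝ) + 1) / (d + 1) ≤ ((r / (d + 1) + 1 : ℕ) : ℝ) := by
    rw [div_le_iff₀ (by positivity)]
    have := Nat.lt_div_mul_add (a := r) (b := d + 1) (by omega)
    exact_mod_cast (by nlinarith : r + 1 ≤ (r / (d + 1) + 1) * (d + 1))
  calc (((r : ℝ) + 1) / (d + 1)) ^ d ≤ ((r / (d + 1) + 1 : ℕ) : ℝ) ^ d :=
        pow_le_pow_left₀ (by positivity) hfloor d
    _ ≤ _ := by exact_mod_cast pow_le_card_antidiagonalTuple_succ d r

end Finset.Nat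

open Finset.Nat Real

lemma Real.rpow_add_le_mul_rpow_add_rpow {x y p : ℝ} (hx : 0 ≤ x) (hy : 0 ≤ y) (hp : 1 ≤ p) :
    (x + y) ^ p ≤ 2 ^ (p - 1) * (x ^ p + y ^ p) := by
  lift x to NNReal using hx
  lift y to NNReal using hy
  exact_mod_cast NNReal.rpow_add_le_mul_rpow_add_rpow x y hp

/-- If `k |s| ≤ 2` then `s t` stays below `1 / 2` on `[0, k / 4]`; otherwise `|s t| ≥ 3 k |s| / 4`
dominates on `[3 k / 4, 7 k / 8]`. -/
lemma exists_Icc_le_abs_mul_sub_one (k : ℕ) (s : ℝ) :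
    ∃ a b : ℕ, b ≤ k ∧ k ≤ 8 * (b + 1 - a) ∧ k ≤ 8 * (k - b + 1) ∧
      ∀ t ∈ Icc a b, (k * |s| + 1) / 6 ≤ |s * t - 1| := by
  have hs := abs_nonneg s
  have hdist (t : ℕ) : |s * t| - 1 ≤ |s * t - 1| := by simpa using abs_sub_abs_le_abs_sub (s * t) 1
  have hdist' (t : ℕ) : 1 - |s * t| ≤ |s * t - 1| := by
    simpa [abs_sub_comm] using abs_sub_abs_le_abs_sub 1 (s * t)
  rcases le_or_gt (k * |s|) 2 with hsmall | hlarge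
  · refine ⟨0, k / 4, by omega, by omega, by omega, fun t ht => ?_⟩
    have ht : 4 * (t : ℝ) ≤ k := by exact_mod_cast (by have := (mem_Icc.1 ht).2; omega : 4 * t ≤ k)
    have := hdist' t
    rw [abs_mul, Nat.abs_cast] at this
    nlinarith
  · refine ⟨k - k / 4, k - k / 8, by omega, by omega, by omega, fun t ht => ?_⟩
    have ht : 3 * (k : ℝ) ≤ 4 * t := by
      exact_mod_cast (by have := (mem_Icc.1 ht).1; omega : 3 * k ≤ 4 * t)
    have := hdist t
    rw [abs_mul, Nat.abs_cast] at this
    nlinarith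

lemma le_sum_card_mul_of_Icc {e k a b : ℕ} (hbk : b ≤ k) (hlen : k ≤ 8 * (b + 1 - a))
    (hgap : k ≤ 8 * (k - b + 1)) {f : ℕ → ℝ} (hf : ∀ t, 0 ≤ f t) {c : ℝ} (hc0 : 0 ≤ c)
    (hc : ∀ t ∈ Icc a b, c ≤ f t) :
    ((k : ℝ) / 8) ^ (e + 1) / (e + 1) ^ e * c ≤
      ∑ t ∈ range (k + 1), #(antidiagonalTuple (e + 1) (k - t)) • f t := by
  have hterm : ∀ t ∈ Icc a b,
      ((k : ℝ) / 8 / (e + 1)) ^ e * c ≤ #(antidiagonalTuple (e + 1) (k - t)) • f t := by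
    intro t ht
    have : (k : ℝ) / 8 ≤ ((k - t : ℕ) : ℝ) + 1 := by
      rw [div_le_iff₀ (by norm_num)]
      exact_mod_cast (by have := (mem_Icc.1 ht).2; omega : k ≤ (k - t + 1) * 8)
    rw [nsmul_eq_mul]
    refine mul_le_mul ?_ (hc t ht) hc0 (by positivity)
    exact (pow_le_pow_left₀ (by positivity) (by gcongr) e).trans
      (div_pow_le_card_antidiagonalTuple_succ e (k - t))
  have hIcc : Icc a b ⊆ range (k + 1) := fun t ht => by
    rw [mem_range]; have := (mem_Icc.1 ht).2; omega
  calc ((k : ℝ) / 8) ^ (e + 1) / (e + 1) ^ e * c = (k / 8) * ((k / 8 / (e + 1)) ^ e * c) := by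
        rw [div_pow ((k : ℝ) / 8) _ e, pow_succ]; ring
    _ ≤ (b + 1 - a : ℕ) * ((k / 8 / (e + 1)) ^ e * c) := by
        gcongr
        rw [div_le_iff₀ (by norm_num)]
        exact_mod_cast (by omega : k ≤ (b + 1 - a) * 8)
    _ = ∑ t ∈ Icc a b, ((k : ℝ) / 8 / (e + 1)) ^ e * c := by
        rw [sum_const, Nat.card_Icc, nsmul_eq_mul]
    _ ≤ ∑ t ∈ Icc a b, #(antidiagonalTuple (e + 1) (k - t)) • f t := sum_le_sum hterm
    _ ≤ _ := sum_le_sum_of_subset_of_nonneg hIcc fun t _ _ => nsmul_nonneg (hf t) _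

lemma le_sum_abs_mul_apply_sub_one_rpow {e : ℕ} (j : Fin (e + 2)) (k : ℕ) (s : ℝ) {p : ℝ}
    (hp : 0 ≤ p) :
    ((k : ℝ) / 8) ^ (e + 1) / (e + 1) ^ e * ((k * |s| + 1) / 6) ^ p ≤
      ∑ n ∈ antidiagonalTuple (e + 2) k, |s * n j - 1| ^ p := by
  obtain ⟨a, b, hbk, hlen, hgap, hfar⟩ := exists_Icc_le_abs_mul_sub_one k s
  rw [sum_antidiagonalTuple_succ_comp_apply (e + 1) k j fun t => |s * t - 1| ^ p]
  exact le_sum_card_mul_of_Icc hbk hlen hgap (fun t => by positivity) (by positivity)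
    fun t ht => rpow_le_rpow (by positivity) (hfar t ht) hp

lemma sum_abs_mul_apply_sub_one_rpow_le {d : ℕ} (j : Fin (d + 1)) (k : ℕ) (s : ℝ) {p : ℝ}
    (hp : 0 ≤ p) :
    ∑ n ∈ antidiagonalTuple (d + 1) k, |s * n j - 1| ^ p ≤
      ((k : ℝ) + 1) ^ d * (k * |s| + 1) ^ p := by
  have hbound (n) (hn : n ∈ antidiagonalTuple (d + 1) k) : |s * n j - 1| ≤ k * |s| + 1 := by
    have : (n j : ℝ) ≤ k := by exact_mod_cast apply_le_of_mem_antidiagonalTuple hn j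
    calc |s * n j - 1| ≤ |s * n j| + |1| := abs_sub _ _
      _ = n j * |s| + 1 := by rw [abs_mul, Nat.abs_cast, abs_one, mul_comm]
      _ ≤ k * |s| + 1 := by gcongr
  calc ∑ n ∈ antidiagonalTuple (d + 1) k, |s * n j - 1| ^ p
      ≤ ∑ n ∈ antidiagonalTuple (d + 1) k, ((k : ℝ) * |s| + 1) ^ p :=
        sum_le_sum fun n hn => rpow_le_rpow (abs_nonneg _) (hbound n hn) hp
    _ = #(antidiagonalTuple (d + 1) k) * ((k : ℝ) * |s| + 1) ^ p := by rw [sum_const, nsmul_eq_mul]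
    _ ≤ _ := by
        gcongr
        exact_mod_cast card_antidiagonalTuple_succ_le d k

theorem stmt7 (m : ℕ) (hm : 2 ≤ m) (p : ℝ) (hp1 : 1 ≤ p) (j : Fin m) :
    ∃ A B : ℝ, 0 < A ∧ 0 < B ∧ ∀ (k : ℕ), 1 ≤ k → ∀ s : ℝ,
      A * ((k : ℝ) ^ (p + m - 1) * |s| ^ p + (k : ℝ) ^ (m - 1 : ℝ)) ≤
        (∑ n ∈ Finset.Nat.antidiagonalTuple m k, |s * n j - 1| ^ p) ∧
      (∑ n ∈ Finset.Nat.antidiagonalTuple m k, |s * n j - 1| ^ p) ≤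
        B * ((k : ℝ) ^ (p + m - 1) * |s| ^ p + (k : ℝ) ^ (m - 1 : ℝ)) := by
  obtain ⟨e, rfl⟩ : ∃ e, m = e + 2 := ⟨m - 2, by omega⟩
  have hp0 : 0 ≤ p := by linarith
  refine ⟨((8 : ℝ) ^ (e + 1) * (e + 1) ^ e * 6 ^ p)⁻¹, (2 : ℝ) ^ (e + 1) * 2 ^ (p - 1),
    by positivity, by positivity, fun k hk s => ?_⟩
  have hk : (1 : ℝ) ≤ k := by exact_mod_cast hk
  have hx : 0 ≤ (k : ℝ) * |s| := by positivity
  have hrhs : (k : ℝ) ^ (p + ((e + 2 : ℕ) : ℝ) - 1) * |s| ^ p +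
      (k : ℝ) ^ (((e + 2 : ℕ) : ℝ) - 1) = k ^ (e + 1) * ((k * |s|) ^ p + 1) := by
    rw [show p + ((e + 2 : ℕ) : ℝ) - 1 = p + ((e + 1 : ℕ) : ℝ) by push_cast; ring,
      show ((e + 2 : ℕ) : ℝ) - 1 = ((e + 1 : ℕ) : ℝ) by push_cast; ring,
      rpow_add (by positivity), rpow_natCast, mul_rpow (by positivity) (abs_nonneg s)]
    ring
  rw [hrhs]
  constructor
  · calc ((8 : ℝ) ^ (e + 1) * (e + 1) ^ e * 6 ^ p)⁻¹ * (k ^ (e + 1) * ((k * |s|) ^ p + 1))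
        ≤ ((8 : ℝ) ^ (e + 1) * (e + 1) ^ e * 6 ^ p)⁻¹ * (k ^ (e + 1) * (k * |s| + 1) ^ p) := by
          gcongr
          simpa using add_rpow_le_rpow_add hx zero_le_one hp1
      _ = ((k : ℝ) / 8) ^ (e + 1) / (e + 1) ^ e * ((k * |s| + 1) / 6) ^ p := by
          rw [div_rpow (by positivity) (by norm_num), div_pow]
          field_simp
      _ ≤ _ := le_sum_abs_mul_apply_sub_one_rpow j k s hp0
  · calc _ ≤ ((k : ℝ) + 1) ^ (e + 1) * (k * |s| + 1) ^ p :=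
          sum_abs_mul_apply_sub_one_rpow_le j k s hp0
      _ ≤ (2 * k) ^ (e + 1) * (2 ^ (p - 1) * ((k * |s|) ^ p + 1)) := by
          gcongr
          · linarith
          · simpa using rpow_add_le_mul_rpow_add_rpow hx zero_le_one hp1
      _ = _ := by ring
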